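/- arXiv:1401.2070 — 5 statements merged into one kernel-verified Lean document; each statement's English description precedes it below -/
import Mathlib

section
/- Every nonzero vector x in the cone K_L = {x ∈ ℝⁿ : ⟪x,r⟫ ≥ (√(n−1)/√n)‖x‖} has all components nonnegative, and at most one component equal to zero. -/
/-!
Write `S = ∑ i, x i`, so that membership in the cone reads `√(n - 1) ‖x‖ ≤ S`. By Cauchy–Schwarz
a sum of `m` coordinates of `x` is at most `√m ‖x‖`. If `x i < 0`, the other `n - 1` coordinates
sum to `S - x i > S ≥ √(n - 1) ‖x‖`; if two coordinates vanish, the remaining `n - 2` sum to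
`S ≥ √(n - 1) ‖x‖ > √(n - 2) ‖x‖`. Both contradict Cauchy–Schwarz.
-/

open Finset

namespace EuclideanSpace

variable {ι : Type*} [Fintype ι]

theorem sq_sum_le_card_mul_norm_sq (s : Finset ι) (x : EuclideanSpace ℝ ι) :
    (∑ i ∈ s, x i) ^ 2 ≤ #s * ‖x‖ ^ 2 := by
  calc (∑ i ∈ s, x i) ^ 2 ≤ #s * ∑ i ∈ s, x i ^ 2 := sq_sum_le_card_mul_sum_sq
    _ ≤ #s * ‖x‖ ^ 2 := by
      rw [real_norm_sq_eq]
      exact mul_le_mul_of_nonneg_left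
        (sum_le_sum_of_subset_of_nonneg (subset_univ s) fun i _ _ => sq_nonneg (x i)) (by positivity)

theorem inner_toLp_const (x : EuclideanSpace ℝ ι) (c : ℝ) :
    inner ℝ x (WithLp.toLp 2 (fun _ => c) : EuclideanSpace ℝ ι) = c * ∑ i, x i := by
  simp [PiLp.inner_apply, Finset.mul_sum]

/-- The cone `K_L = {x : ⟪x, r⟫ ≥ √(n-1)/√n ‖x‖}`, multiplied through by `√n`. -/
def coneKL (ι : Type*) [Fintype ι] : Set (EuclideanSpace ℝ ι) :=
  {x | √(Fintype.card ι - 1) * ‖x‖ ≤ ∑ i, x i}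

variable {x : EuclideanSpace ℝ ι}

theorem sum_nonneg_of_mem_coneKL (hx : x ∈ coneKL ι) : 0 ≤ ∑ i, x i :=
  (mul_nonneg (Real.sqrt_nonneg _) (norm_nonneg x)).trans hx

theorem card_sub_one_mul_norm_sq_le_of_mem_coneKL [Nonempty ι] (hx : x ∈ coneKL ι) :
    (Fintype.card ι - 1) * ‖x‖ ^ 2 ≤ (∑ i, x i) ^ 2 := by
  rw [← Real.sq_sqrt (sub_nonneg.mpr (Nat.one_le_cast.mpr Fintype.card_pos)), ← mul_pow]
  exact pow_le_pow_left₀ (by positivity) hx 2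

theorem apply_nonneg_of_mem_coneKL [DecidableEq ι] (hx : x ∈ coneKL ι) (i : ι) : 0 ≤ x i := by
  have : Nonempty ι := ⟨i⟩
  let S := ∑ i, x i
  have hcard : (#(univ.erase i) : ℝ) = Fintype.card ι - 1 := by
    rw [← card_univ, ← card_erase_add_one (mem_univ i)]
    push_cast
    ring
  have hsq : (S - x i) ^ 2 ≤ S ^ 2 := calc
    (S - x i) ^ 2 = (∑ j ∈ univ.erase i, x j) ^ 2 := by
      simp only [S, ← add_sum_erase univ (fun j => x j) (mem_univ i), add_sub_cancel_left]
    _ ≤ (Fintype.card ι - 1) * ‖x‖ ^ 2 := hcard ▸ sq_sum_le_card_mul_norm_sq _ x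
    _ ≤ S ^ 2 := card_sub_one_mul_norm_sq_le_of_mem_coneKL hx
  linarith [le_abs_self (S - x i), abs_of_nonneg (sum_nonneg_of_mem_coneKL hx), sq_le_sq.mp hsq]

theorem eq_of_apply_eq_zero_of_mem_coneKL [DecidableEq ι] (hx : x ∈ coneKL ι) (hx0 : x ≠ 0)
    {i j : ι} (hi : x i = 0) (hj : x j = 0) : i = j := by
  by_contra hij
  have : Nonempty ι := ⟨i⟩
  let S := ∑ i, x i
  have hj_mem : j ∈ univ.erase i := mem_erase.mpr ⟨Ne.symm hij, mem_univ j⟩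
  have hcard : (#((univ.erase i).erase j) : ℝ) = Fintype.card ι - 2 := by
    rw [← card_univ, ← card_erase_add_one (mem_univ i), ← card_erase_add_one hj_mem]
    push_cast
    ring
  have hnorm : 0 < ‖x‖ := norm_pos_iff.mpr hx0
  have hsq : S ^ 2 < S ^ 2 := calc
    S ^ 2 = (∑ k ∈ (univ.erase i).erase j, x k) ^ 2 := by rw [sum_erase _ hj, sum_erase _ hi]
    _ ≤ (Fintype.card ι - 2) * ‖x‖ ^ 2 := hcard ▸ sq_sum_le_card_mul_norm_sq _ x
    _ < (Fintype.card ι - 1) * ‖x‖ ^ 2 := by gcongr; norm_num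
    _ ≤ S ^ 2 := card_sub_one_mul_norm_sq_le_of_mem_coneKL hx
  exact lt_irrefl _ hsq

end EuclideanSpace

theorem stmt5_general (n : ℕ) (x : EuclideanSpace ℝ (Fin n)) (hx : x ≠ 0)
    (hxK : (Real.sqrt (n - 1) / Real.sqrt n) * ‖x‖
        ≤ inner ℝ x ((WithLp.toLp 2 (fun _ => 1 / Real.sqrt n) : EuclideanSpace ℝ (Fin n)))) :
    (∀ i, 0 ≤ x i) ∧ ∀ i j, x i = 0 → x j = 0 → i = j := by
  have hn : 0 < n := Nat.pos_of_ne_zero fun h => hx (by subst h; exact Subsingleton.elim x 0)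
  have hK : x ∈ EuclideanSpace.coneKL (Fin n) := by
    rw [EuclideanSpace.inner_toLp_const, div_mul_eq_mul_div, one_div_mul_eq_div] at hxK
    have hsqrt_pos : 0 < √(n : ℝ) := Real.sqrt_pos.mpr (Nat.cast_pos.mpr hn)
    simpa [EuclideanSpace.coneKL] using (div_le_div_iff_of_pos_right hsqrt_pos).mp hxK
  exact ⟨EuclideanSpace.apply_nonneg_of_mem_coneKL hK,
    fun i j => EuclideanSpace.eq_of_apply_eq_zero_of_mem_coneKL hK hx⟩

/-- Every nonzero `x ∈ K_L` has all components nonnegative, and at most one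
component equal to zero. -/
theorem stmt5 (n : ℕ) (hn : 2 ≤ n) (x : EuclideanSpace ℝ (Fin n)) (hx : x ≠ 0)
    (hxK : (Real.sqrt (n - 1) / Real.sqrt n) * ‖x‖
        ≤ inner ℝ x ((WithLp.toLp 2 (fun _ => 1 / Real.sqrt n) : EuclideanSpace ℝ (Fin n)))) :
    (∀ i, 0 ≤ x i) ∧ ∀ i j, x i = 0 → x j = 0 → i = j :=
  stmt5_general n x hx hxK
end

section
/- A point x* ∈ X is K(s)-optimal if and only if G(x*) = 0 and every maximizer y* of y ↦ ∑ᵢ(Fᵢ(y) − Fᵢ(x*)) − s√n‖F(y) − F(x*)‖ over X satisfies F(y*) = F(x*). -/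
/-- `xs` is `K(s)`-optimal iff `G(xs) = 0` and every maximizer `ys` of
`y ↦ ∑ᵢ (Fᵢ(y) - Fᵢ(xs)) - s√n ‖F(y) - F(xs)‖` over `X` satisfies `F(ys) = F(xs)`. -/
theorem stmt11 (n : ℕ) (hn : 1 ≤ n) (s : ℝ) (hs : s ∈ Set.Ioo (0 : ℝ) 1)
    {X : Type*} [Nonempty X] (F : X → EuclideanSpace ℝ (Fin n)) (xs : X) :
    let φ : X → ℝ := fun y => ∑ i, (F y i - F xs i) - s * Real.sqrt n * ‖F y - F xs‖
    let G : X → EReal := fun x =>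
      ⨆ y : X, ((∑ i, (F y i - F x i) - s * Real.sqrt n * ‖F y - F x‖ : ℝ) : EReal)
    ((¬ ∃ x : X, F x ≠ F xs ∧ F x - F xs ∈
        {z : EuclideanSpace ℝ (Fin n) | s * Real.sqrt n * ‖z‖ ≤ ∑ i, z i}) ↔
      (G xs = 0 ∧ ∀ ys : X, (∀ y : X, φ y ≤ φ ys) → F ys = F xs)) := by
  intro φ G
  have hφxs : φ xs = 0 := by simp [φ]
  have hsum : ∀ y : X, (∑ i, (F y - F xs) i) = ∑ i, (F y i - F xs i) := by
    intro y; rfl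
  constructor
  · intro hopt
    -- every φ y ≤ 0
    have hle : ∀ y : X, φ y ≤ 0 := by
      intro y
      by_cases hy : F y = F xs
      · have hz : φ y = 0 := by simp only [φ, hy]; simp
        exact hz.le
      · have h2 : ¬ s * Real.sqrt n * ‖F y - F xs‖ ≤ ∑ i, (F y - F xs) i := by
          intro hc; exact hopt ⟨y, hy, hc⟩
        rw [hsum y] at h2
        simp only [φ]
        linarith [not_le.mp h2]
    have hG0 : G xs = 0 := by
      apply le_antisymm
      · refine iSup_le fun y => ?_
        have := hle y
        exact_mod_cast (by exact_mod_cast this : ((φ y : ℝ) : EReal) ≤ ((0 : ℝ) : EReal))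
      · have h := le_iSup (fun y : X =>
          ((∑ i, (F y i - F xs i) - s * Real.sqrt n * ‖F y - F xs‖ : ℝ) : EReal)) xs
        calc (0 : EReal) = ((φ xs : ℝ) : EReal) := by rw [hφxs]; rfl
          _ ≤ G xs := h
    refine ⟨hG0, fun ys hmax => ?_⟩
    have h1 : (0 : ℝ) ≤ φ ys := hφxs ▸ hmax xs
    have h2 : φ ys ≤ 0 := hle ys
    by_contra hne
    have hc : ¬ s * Real.sqrt n * ‖F ys - F xs‖ ≤ ∑ i, (F ys - F xs) i := by
      intro hc; exact hopt ⟨ys, hne, hc⟩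
    rw [hsum ys] at hc
    simp only [φ] at h1
    linarith [not_le.mp hc]
  · rintro ⟨hG0, hmax⟩ ⟨x, hne, hcone⟩
    simp only [Set.mem_setOf_eq] at hcone
    rw [hsum x] at hcone
    have hx0 : (0 : ℝ) ≤ φ x := by simp only [φ]; linarith
    -- from G xs = 0, each φ y ≤ 0
    have hle : ∀ y : X, φ y ≤ 0 := by
      intro y
      have h := le_iSup (fun y : X =>
        ((∑ i, (F y i - F xs i) - s * Real.sqrt n * ‖F y - F xs‖ : ℝ) : EReal)) y
      rw [show (⨆ y : X, ((∑ i, (F y i - F xs i) - s * Real.sqrt n * ‖F y - F xs‖ : ℝ) : EReal))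
        = G xs from rfl, hG0] at h
      have : ((φ y : ℝ) : EReal) ≤ ((0 : ℝ) : EReal) := by exact_mod_cast h
      exact_mod_cast this
    have hxmax : ∀ y : X, φ y ≤ φ x := fun y => le_trans (hle y) hx0
    exact hne (hmax x hxmax)
end

section
/- Let s ∈ (0,1), λ be an interior point of the dual cone K(√(1−s²)) (i.e., ⟪λ,r⟫ > √(1−s²)·‖λ‖, λ ≠ 0), and suppose x* maximizes x ↦ ∑ᵢλᵢFᵢ(x) over X. Then x* is K(s)-optimal: there is no x ∈ X with F(x) ≠ F(x*) and F(x) − F(x*) ∈ K(s). -/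
/-!
`λ` lies within angle `arcsin s` of `r` and `z` within angle `arccos s` of `r`, so by the
triangle inequality for angles `∠(λ, z) < arcsin s + arccos s = π / 2`, i.e. `⟪λ, z⟫ > 0`.
Applied to `z = F x - F xs`, this contradicts the maximality of `xs`.
-/

open Real InnerProductGeometry

section
variable {V : Type*} [NormedAddCommGroup V] [InnerProductSpace ℝ V]

theorem inner_pos_of_angle_lt_pi_div_two {x y : V} (h : angle x y < π / 2) :
    0 < inner ℝ x y := by
  rw [angle, arccos_lt_pi_div_two, div_pos_iff] at h
  rcases h with ⟨hpos, -⟩ | ⟨-, hneg⟩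
  · exact hpos
  · exact absurd hneg (not_lt.mpr (by positivity))

theorem angle_lt_arcsin_of_sqrt_one_sub_sq_mul_norm_lt_inner {x u : V} (hu : ‖u‖ = 1) {s : ℝ}
    (hs : 0 ≤ s) (h : √(1 - s ^ 2) * ‖x‖ < inner ℝ x u) : angle x u < arcsin s := by
  have hx : 0 < ‖x‖ := norm_pos_iff.mpr (by rintro rfl; simp at h)
  have hcos : cos (arcsin s) < cos (angle x u) := by
    rwa [cos_arcsin, cos_angle, hu, mul_one, lt_div_iff₀ hx]
  exact strictAntiOn_cos.lt_iff_gt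
    ⟨arcsin_nonneg.mpr hs, (arcsin_le_pi_div_two s).trans (by linarith [pi_pos])⟩
    ⟨angle_nonneg x u, angle_le_pi x u⟩ |>.mp hcos

theorem angle_le_arccos_of_mul_norm_le_inner {z u : V} (hu : ‖u‖ = 1) (hz : z ≠ 0) {s : ℝ}
    (h : s * ‖z‖ ≤ inner ℝ z u) : angle z u ≤ arccos s := by
  rw [angle, hu, mul_one]
  exact arccos_le_arccos ((le_div_iff₀ (norm_pos_iff.mpr hz)).mpr h)

theorem inner_pos_of_mem_cone_of_mem_dualCone {x z u : V} (hu : ‖u‖ = 1) (hz : z ≠ 0) {s : ℝ}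
    (hs : 0 ≤ s) (hx : √(1 - s ^ 2) * ‖x‖ < inner ℝ x u) (hzu : s * ‖z‖ ≤ inner ℝ z u) :
    0 < inner ℝ x z := by
  apply inner_pos_of_angle_lt_pi_div_two
  calc angle x z ≤ angle x u + angle u z := angle_le_angle_add_angle x u z
    _ < arcsin s + arccos s := by
      rw [angle_comm u z]
      exact add_lt_add_of_lt_of_le
        (angle_lt_arcsin_of_sqrt_one_sub_sq_mul_norm_lt_inner hu hs hx)
        (angle_le_arccos_of_mul_norm_le_inner hu hz hzu)
    _ = π / 2 := by rw [arccos_eq_pi_div_two_sub_arcsin]; ring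

end

theorem EuclideanSpace.norm_toLp_const_inv_sqrt {n : ℕ} (hn : 1 ≤ n) :
    ‖(WithLp.toLp 2 (fun _ => 1 / √n) : EuclideanSpace ℝ (Fin n))‖ = 1 := by
  rw [EuclideanSpace.norm_eq]
  simp only [one_div, norm_inv, norm_eq_abs, sq_abs, inv_pow, sq_sqrt (Nat.cast_nonneg n),
    Finset.sum_const, Finset.card_univ, Fintype.card_fin, nsmul_eq_mul]
  rw [mul_inv_cancel₀ (by positivity), sqrt_one]

theorem EuclideanSpace.inner_eq_sum_mul {n : ℕ} (x y : EuclideanSpace ℝ (Fin n)) :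
    inner ℝ x y = ∑ i, x i * y i := by
  simp [PiLp.inner_apply, mul_comm]

theorem stmt14_general (n : ℕ) (hn : 1 ≤ n) (s : ℝ) (hs : s ∈ Set.Ioo (0 : ℝ) 1)
    {X : Type*} (F : X → EuclideanSpace ℝ (Fin n)) (xs : X)
    (lam : EuclideanSpace ℝ (Fin n))
    (hlam : Real.sqrt (1 - s ^ 2) * ‖lam‖ <
        inner ℝ lam ((WithLp.toLp 2 (fun _ => 1 / Real.sqrt n) : EuclideanSpace ℝ (Fin n))))
    (hmax : ∀ x : X, ∑ i, lam i * F x i ≤ ∑ i, lam i * F xs i) :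
    ¬ ∃ x : X, F x ≠ F xs ∧ F x - F xs ∈
      {z : EuclideanSpace ℝ (Fin n) |
        s * ‖z‖ ≤ inner ℝ z ((WithLp.toLp 2 (fun _ => 1 / Real.sqrt n) : EuclideanSpace ℝ (Fin n)))} := by
  rintro ⟨x, hne, hmem⟩
  have hpos := inner_pos_of_mem_cone_of_mem_dualCone (EuclideanSpace.norm_toLp_const_inv_sqrt hn)
    (sub_ne_zero.mpr hne) hs.1.le hlam hmem
  rw [inner_sub_right, EuclideanSpace.inner_eq_sum_mul, EuclideanSpace.inner_eq_sum_mul] at hpos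
  linarith [hmax x]

/-- If `λ` is interior to the dual cone `K(√(1-s²))` and `xs` maximizes
`x ↦ ∑ᵢ λᵢ Fᵢ(x)` over `X`, then `xs` is `K(s)`-optimal. -/
theorem stmt14 (n : ℕ) (hn : 1 ≤ n) (s : ℝ) (hs : s ∈ Set.Ioo (0 : ℝ) 1)
    {X : Type*} (F : X → EuclideanSpace ℝ (Fin n)) (xs : X)
    (lam : EuclideanSpace ℝ (Fin n)) (hlam0 : lam ≠ 0)
    (hlam : Real.sqrt (1 - s ^ 2) * ‖lam‖ <
        inner ℝ lam ((WithLp.toLp 2 (fun _ => 1 / Real.sqrt n) : EuclideanSpace ℝ (Fin n))))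
    (hmax : ∀ x : X, ∑ i, lam i * F x i ≤ ∑ i, lam i * F xs i) :
    ¬ ∃ x : X, F x ≠ F xs ∧ F x - F xs ∈
      {z : EuclideanSpace ℝ (Fin n) |
        s * ‖z‖ ≤ inner ℝ z ((WithLp.toLp 2 (fun _ => 1 / Real.sqrt n) : EuclideanSpace ℝ (Fin n)))} :=
  stmt14_general n hn s hs F xs lam hlam hmax
end

section
/- Let (x*, y*) be a weak K(s)-optimal pair with X ⊆ ℝᵏ, each Fᵢ differentiable, y* an interior point of X, and G(x*) = 0 with y* attaining the supremum. Then ∑ᵢ Fᵢ'(y*)·[∑ⱼ Δⱼ*(y*) − s²n·Δᵢ*(y*)] = 0 and ∑ᵢ Δᵢ*(y*) − s√n·‖F(y*) − F(x*)‖ = 0, where Δᵢ*(y) = Fᵢ(y) − Fᵢ(x*). -/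
/-!
Taking `y = xs` in `hysmax` and `y = ys` in `hG` shows that the maximal value
`φ(ys)` of `φ(y) = ∑ᵢ Δᵢ(y) - s√n ‖Δ(y)‖` is `0`. If `Δ(ys) ≠ 0`, then `φ` is differentiable
at the interior maximiser `ys`, so its gradient `∑ᵢ ∇Fᵢ - (s√n / ‖Δ‖) ∑ᵢ Δᵢ ∇Fᵢ` vanishes there;
multiplying by `s√n ‖Δ‖ = ∑ⱼ Δⱼ` gives the first identity.
-/

open InnerProductSpace

theorem IsLocalMax.hasGradientAt_eq_zero {E : Type*} [NormedAddCommGroup E]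
    [InnerProductSpace ℝ E] [CompleteSpace E] {f : E → ℝ} {f' a : E}
    (h : IsLocalMax f a) (hf : HasGradientAt f f' a) : f' = 0 :=
  (toDual ℝ E).map_eq_zero_iff.mp (h.hasFDerivAt_eq_zero (hasGradientAt_iff_hasFDerivAt.mp hf))

section
variable {ι E : Type*} [Fintype ι] [NormedAddCommGroup E]

theorem HasFDerivAt.norm_sub_euclidean [NormedSpace ℝ E] {F : E → EuclideanSpace ℝ ι}
    {L : ι → StrongDual ℝ E} {a : EuclideanSpace ℝ ι} {y : E}
    (hF : ∀ i, HasFDerivAt (fun x => F x i) (L i) y) (hy : F y ≠ a) :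
    HasFDerivAt (fun x => ‖F x - a‖) (‖F y - a‖⁻¹ • ∑ i, (F y i - a i) • L i) y := by
  have hnorm : ∀ x, ‖F x - a‖ = √(∑ i, (F x i - a i) ^ 2) := fun x => by
    simp [EuclideanSpace.norm_eq, sq_abs]
  have hsq : HasFDerivAt (fun x => ∑ i, (F x i - a i) ^ 2)
      (∑ i, (2 * (F y i - a i)) • L i) y :=
    (HasFDerivAt.fun_sum (u := Finset.univ) fun i _ =>
      ((hF i).sub_const (a i)).pow 2).congr_fderiv (by simp)
  have hpos : ∑ i, (F y i - a i) ^ 2 ≠ 0 := by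
    intro h
    have := hnorm y
    rw [h, Real.sqrt_zero, norm_eq_zero, sub_eq_zero] at this
    exact hy this
  rw [funext hnorm]
  refine (hsq.sqrt hpos).congr_fderiv ?_
  rw [← hnorm, Finset.smul_sum, Finset.smul_sum]
  refine Finset.sum_congr rfl fun i _ => ?_
  rw [smul_smul, smul_smul]
  congr 1
  field_simp

variable [InnerProductSpace ℝ E] [CompleteSpace E]

theorem hasGradientAt_sum_sub_sub_mul_norm_sub {F : E → EuclideanSpace ℝ ι} {g : ι → E}
    {a : EuclideanSpace ℝ ι} {y : E} (t : ℝ)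
    (hF : ∀ i, HasGradientAt (fun x => F x i) (g i) y) (hy : F y ≠ a) :
    HasGradientAt (fun x => ∑ i, (F x i - a i) - t * ‖F x - a‖)
      (∑ i, g i - (t / ‖F y - a‖) • ∑ i, (F y i - a i) • g i) y := by
  have hL : ∀ i, HasFDerivAt (fun x => F x i) (toDual ℝ E (g i)) y := fun i => (hF i).hasFDerivAt
  rw [hasGradientAt_iff_hasFDerivAt]
  refine ((HasFDerivAt.fun_sum (u := Finset.univ) fun i _ => (hL i).sub_const (a i)).sub
    ((HasFDerivAt.norm_sub_euclidean hL hy).const_mul t)).congr_fderiv ?_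
  simp only [map_sub, map_sum, map_smul, smul_smul, div_eq_mul_inv]

end

theorem stmt16_general (n k : ℕ) (s : ℝ)
    (X : Set (EuclideanSpace ℝ (Fin k)))
    (F : EuclideanSpace ℝ (Fin k) → EuclideanSpace ℝ (Fin n))
    (g : Fin n → EuclideanSpace ℝ (Fin k))
    (xs ys : EuclideanSpace ℝ (Fin k))
    (hxs : xs ∈ X) (hysint : ys ∈ interior X)
    (hdiff : ∀ i, HasGradientAt (fun x => F x i) (g i) ys)
    -- `G(xs) = 0` : the supremum of `φ` over `X` is `0` (attained at `y = xs`)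
    (hG : ∀ y ∈ X, ∑ i, (F y i - F xs i) - s * Real.sqrt n * ‖F y - F xs‖ ≤ 0)
    -- `ys` attains the supremum in the definition of `G(xs)`
    (hysmax : ∀ y ∈ X, ∑ i, (F y i - F xs i) - s * Real.sqrt n * ‖F y - F xs‖ ≤
        ∑ i, (F ys i - F xs i) - s * Real.sqrt n * ‖F ys - F xs‖) :
    (∑ i, (∑ j, (F ys j - F xs j) - s ^ 2 * n * (F ys i - F xs i)) • g i = 0) ∧
      ∑ i, (F ys i - F xs i) - s * Real.sqrt n * ‖F ys - F xs‖ = 0 := by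
  have hval : ∑ i, (F ys i - F xs i) - s * √n * ‖F ys - F xs‖ = 0 :=
    le_antisymm (hG ys (interior_subset hysint)) (by simpa using hysmax xs hxs)
  refine ⟨?_, hval⟩
  rcases eq_or_ne (F ys) (F xs) with heq | hne
  · simp [heq]
  have hmax : IsLocalMax (fun y => ∑ i, (F y i - F xs i) - s * √n * ‖F y - F xs‖) ys :=
    Filter.mem_of_superset (mem_interior_iff_mem_nhds.mp hysint) hysmax
  have hstat := hmax.hasGradientAt_eq_zero
    (hasGradientAt_sum_sub_sub_mul_norm_sub (s * √n) hdiff hne)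
  have hc : ‖F ys - F xs‖ ≠ 0 := norm_ne_zero_iff.mpr (sub_ne_zero.mpr hne)
  have hn : s ^ 2 * n = (s * √n) ^ 2 := by rw [mul_pow, Real.sq_sqrt n.cast_nonneg]
  calc ∑ i, (∑ j, (F ys j - F xs j) - s ^ 2 * n * (F ys i - F xs i)) • g i
      = (s * √n * ‖F ys - F xs‖) • (∑ i, g i -
          (s * √n / ‖F ys - F xs‖) • ∑ i, (F ys i - F xs i) • g i) := by
        rw [sub_eq_zero.mp hval, hn, smul_sub, smul_smul, Finset.smul_sum, Finset.smul_sum,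
          ← Finset.sum_sub_distrib]
        refine Finset.sum_congr rfl fun i _ => ?_
        rw [smul_smul, ← sub_smul]
        field_simp
    _ = 0 := by rw [hstat, smul_zero]

/-- First-order necessary conditions at a weak `K(s)`-optimal pair
`(xs, ys)`: `∑ᵢ [∑ⱼ Δⱼ*(ys) - s²n Δᵢ*(ys)] ∇Fᵢ(ys) = 0` and
`∑ᵢ Δᵢ*(ys) - s√n ‖F(ys) - F(xs)‖ = 0`. -/
theorem stmt16 (n k : ℕ) (s : ℝ) (hs : s ∈ Set.Ioo (0 : ℝ) 1)
    (X : Set (EuclideanSpace ℝ (Fin k)))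
    (F : EuclideanSpace ℝ (Fin k) → EuclideanSpace ℝ (Fin n))
    (g : Fin n → EuclideanSpace ℝ (Fin k))
    (xs ys : EuclideanSpace ℝ (Fin k))
    (hxs : xs ∈ X) (hysX : ys ∈ X) (hysint : ys ∈ interior X)
    (hdiff : ∀ i, HasGradientAt (fun x => F x i) (g i) ys)
    -- `G(xs) = 0` : the supremum of `φ` over `X` is `0` (attained at `y = xs`)
    (hG : ∀ y ∈ X, ∑ i, (F y i - F xs i) - s * Real.sqrt n * ‖F y - F xs‖ ≤ 0)
    -- `ys` attains the supremum in the definition of `G(xs)`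
    (hysmax : ∀ y ∈ X, ∑ i, (F y i - F xs i) - s * Real.sqrt n * ‖F y - F xs‖ ≤
        ∑ i, (F ys i - F xs i) - s * Real.sqrt n * ‖F ys - F xs‖) :
    (∑ i, (∑ j, (F ys j - F xs j) - s ^ 2 * n * (F ys i - F xs i)) • g i = 0) ∧
      ∑ i, (F ys i - F xs i) - s * Real.sqrt n * ‖F ys - F xs‖ = 0 :=
  stmt16_general n k s X F g xs ys hxs hysint hdiff hG hysmax
end

section
/- Let x* be a local weak K(s)-optimal interior point of X ⊆ ℝᵏ, with F : ℝᵏ → ℝⁿ differentiable at x*. Then there is no direction h ∈ ℝᵏ with F'(x*)h ∈ Int K(s), and consequently there exists a nonzero λ ∈ K(√(1−s²)) such that ∑ᵢ λᵢ Fᵢ'(x*) = 0. -/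
open Filter Topology

set_option maxHeartbeats 2000000 in
/-- If `xs` is a local weak `K(s)`-optimal interior point of `X` and `F` is
differentiable at `xs`, then no direction `h` has `F'(xs)h ∈ Int K(s)`, and there exists a
nonzero `λ ∈ K(√(1-s²))` with `∑ᵢ λᵢ Fᵢ'(xs) = 0`. -/
theorem stmt17 (n k : ℕ) (hn : 1 ≤ n) (s : ℝ) (hs : s ∈ Set.Ioo (0 : ℝ) 1)
    (X : Set (EuclideanSpace ℝ (Fin k)))
    (F : EuclideanSpace ℝ (Fin k) → EuclideanSpace ℝ (Fin n))
    (A : EuclideanSpace ℝ (Fin k) →L[ℝ] EuclideanSpace ℝ (Fin n))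
    (xs : EuclideanSpace ℝ (Fin k)) (hxsX : xs ∈ X) (hxsint : xs ∈ interior X)
    (hdiff : HasFDerivAt F A xs)
    -- local weak `K(s)`-optimality
    (hopt : ∃ ε > 0, ¬ ∃ x ∈ Metric.ball xs ε ∩ X,
        F x - F xs ≠ 0 ∧ s * Real.sqrt n * ‖F x - F xs‖ < ∑ i, (F x i - F xs i)) :
    (¬ ∃ h : EuclideanSpace ℝ (Fin k),
        A h ≠ 0 ∧ s * Real.sqrt n * ‖A h‖ < ∑ i, A h i) ∧
      ∃ lam : EuclideanSpace ℝ (Fin n), lam ≠ 0 ∧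
        Real.sqrt (1 - s ^ 2) * ‖lam‖ ≤
          inner ℝ lam (WithLp.toLp 2 (fun _ => 1 / Real.sqrt n) : EuclideanSpace ℝ (Fin n)) ∧
        ∀ h : EuclideanSpace ℝ (Fin k), ∑ i, lam i * A h i = 0 := by
  obtain ⟨hs0, hs1⟩ := hs
  have hn0 : (0:ℝ) < n := by exact_mod_cast hn
  have hsn : (0:ℝ) < Real.sqrt n := Real.sqrt_pos.2 hn0
  have hsng : (0:ℝ) < s * Real.sqrt n := mul_pos hs0 hsn
  set S : Set (EuclideanSpace ℝ (Fin n)) :=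
    {z | s * Real.sqrt n * ‖z‖ < ∑ i, z i} with hS
  have hSopen : IsOpen S :=
    isOpen_lt (continuous_const.mul continuous_norm)
      (continuous_finset_sum _ fun i _ => (EuclideanSpace.proj i).continuous)
  have hsumsmul : ∀ (t : ℝ) (z : EuclideanSpace ℝ (Fin n)),
      ∑ i, (t • z) i = t * ∑ i, z i := by
    intro t z
    simp [Finset.mul_sum]
  have hscale : ∀ (δ : ℝ), 0 < δ → ∀ z ∈ S, δ • z ∈ S := by
    intro δ hδ z hz
    simp only [hS, Set.mem_setOf_eq] at hz ⊢
    rw [hsumsmul, norm_smul, Real.norm_eq_abs, abs_of_pos hδ]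
    calc s * Real.sqrt n * (δ * ‖z‖) = δ * (s * Real.sqrt n * ‖z‖) := by ring
      _ < δ * ∑ i, z i := by exact mul_lt_mul_of_pos_left hz hδ
  -- Part 1
  have part1 : ¬ ∃ h : EuclideanSpace ℝ (Fin k),
      A h ≠ 0 ∧ s * Real.sqrt n * ‖A h‖ < ∑ i, A h i := by
    rintro ⟨h, -, hAh⟩
    obtain ⟨ε, hε, hno⟩ := hopt
    apply hno
    have hline := (hdiff.hasLineDerivAt h).tendsto_slope_zero_right
    have h1 : ∀ᶠ t in 𝓝[>] (0:ℝ),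
        (t⁻¹ • (F (xs + t • h) - F xs)) ∈ S :=
      hline (hSopen.mem_nhds hAh)
    have hcont : Continuous (fun t : ℝ => xs + t • h) := by continuity
    have htend : Tendsto (fun t : ℝ => xs + t • h) (𝓝 0) (𝓝 xs) := by
      have := hcont.tendsto 0
      simpa using this
    have hmem : Metric.ball xs ε ∩ interior X ∈ 𝓝 xs :=
      (Metric.isOpen_ball.inter isOpen_interior).mem_nhds
        ⟨Metric.mem_ball_self hε, hxsint⟩
    have h2 : ∀ᶠ t in 𝓝[>] (0:ℝ),
        (xs + t • h) ∈ Metric.ball xs ε ∩ interior X :=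
      (htend.eventually_mem hmem).filter_mono nhdsWithin_le_nhds
    have h3 : ∀ᶠ t : ℝ in 𝓝[>] (0:ℝ), 0 < t := eventually_mem_nhdsWithin
    obtain ⟨t, ht0, hzS, hxmem⟩ := (h3.and (h1.and h2)).exists
    set x := xs + t • h with hxdef
    set z := t⁻¹ • (F x - F xs) with hzdef
    have hveq : F x - F xs = t • z := (smul_inv_smul₀ (ne_of_gt ht0) _).symm
    simp only [hS, Set.mem_setOf_eq] at hzS
    have hz0 : z ≠ 0 := by
      intro hz00
      rw [hz00] at hzS
      simp at hzS
    refine ⟨x, ⟨hxmem.1, interior_subset hxmem.2⟩, ?_, ?_⟩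
    · rw [hveq]
      exact smul_ne_zero (ne_of_gt ht0) hz0
    · have hcoord : ∀ i, F x i - F xs i = (F x - F xs) i := fun i => rfl
      calc s * Real.sqrt n * ‖F x - F xs‖
          = s * Real.sqrt n * (t * ‖z‖) := by
            rw [hveq, norm_smul, Real.norm_eq_abs, abs_of_pos ht0]
        _ = t * (s * Real.sqrt n * ‖z‖) := by ring
        _ < t * ∑ i, z i := mul_lt_mul_of_pos_left hzS ht0
        _ = ∑ i, (t • z) i := (hsumsmul t z).symm
        _ = ∑ i, (F x i - F xs i) := by
            rw [← hveq]
            exact Finset.sum_congr rfl fun i _ => rfl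
  refine ⟨part1, ?_⟩
  -- Part 2 : separation
  have hSconv : Convex ℝ S := by
    intro z₁ hz₁ z₂ hz₂ a b ha hb hab
    simp only [hS, Set.mem_setOf_eq] at hz₁ hz₂ ⊢
    have hnorm : ‖a • z₁ + b • z₂‖ ≤ a * ‖z₁‖ + b * ‖z₂‖ := by
      calc ‖a • z₁ + b • z₂‖ ≤ ‖a • z₁‖ + ‖b • z₂‖ := norm_add_le _ _
        _ = a * ‖z₁‖ + b * ‖z₂‖ := by
            rw [norm_smul, norm_smul, Real.norm_eq_abs, Real.norm_eq_abs,
              abs_of_nonneg ha, abs_of_nonneg hb]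
    have hsum : ∑ i, (a • z₁ + b • z₂) i = a * ∑ i, z₁ i + b * ∑ i, z₂ i := by
      simp [Finset.sum_add_distrib, Finset.mul_sum]
    rw [hsum]
    rcases ha.lt_or_eq with ha' | ha'
    · have k1 : a * (s * Real.sqrt n * ‖z₁‖) < a * ∑ i, z₁ i :=
        mul_lt_mul_of_pos_left hz₁ ha'
      have k2 : b * (s * Real.sqrt n * ‖z₂‖) ≤ b * ∑ i, z₂ i :=
        mul_le_mul_of_nonneg_left hz₂.le hb
      calc s * Real.sqrt n * ‖a • z₁ + b • z₂‖
          ≤ s * Real.sqrt n * (a * ‖z₁‖ + b * ‖z₂‖) :=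
            mul_le_mul_of_nonneg_left hnorm hsng.le
        _ = a * (s * Real.sqrt n * ‖z₁‖) + b * (s * Real.sqrt n * ‖z₂‖) := by ring
        _ < a * ∑ i, z₁ i + b * ∑ i, z₂ i := by linarith
    · have hb1 : b = 1 := by linarith
      subst hb1
      rw [← ha']
      simpa using hz₂
  have hCconv : Convex ℝ (Set.range (A : EuclideanSpace ℝ (Fin k) → EuclideanSpace ℝ (Fin n))) := by
    rintro _ ⟨u, rfl⟩ _ ⟨v, rfl⟩ a b ha hb hab
    exact ⟨a • u + b • v, by simp⟩
  have hdisj : Disjoint S (Set.range (A : EuclideanSpace ℝ (Fin k) → EuclideanSpace ℝ (Fin n))) := by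
    rw [Set.disjoint_left]
    rintro z hz ⟨h, rfl⟩
    have hz' : s * Real.sqrt n * ‖A h‖ < ∑ i, A h i := hz
    have hz0 : A h ≠ 0 := by
      rintro h0
      rw [h0] at hz'
      simp at hz'
    exact part1 ⟨h, hz0, hz'⟩
  obtain ⟨f, c, hfS, hfC⟩ := geometric_hahn_banach_open hSconv hSopen hCconv hdisj
  have hc0 : c ≤ 0 := by simpa using hfC 0 ⟨0, map_zero A⟩
  have hfA : ∀ h, f (A h) = 0 := by
    intro h
    by_contra hne
    have h1 := hfC (((c-1) / f (A h)) • A h) ⟨((c-1) / f (A h)) • h, by simp⟩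
    rw [map_smul, smul_eq_mul, div_mul_cancel₀ _ hne] at h1
    linarith
  set r : EuclideanSpace ℝ (Fin n) := WithLp.toLp 2 (fun _ => 1 / Real.sqrt n) with hrdef
  have hrsum : ∑ i : Fin n, r i = Real.sqrt n := by
    simp only [hrdef, PiLp.toLp_apply]
    rw [Finset.sum_const, Finset.card_univ, Fintype.card_fin, nsmul_eq_mul, mul_one_div,
      Real.div_sqrt]
  have hrn : ‖r‖ = 1 := by
    rw [EuclideanSpace.norm_eq]
    have : ∀ i : Fin n, ‖r i‖ ^ 2 = 1 / n := by
      intro i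
      simp only [hrdef, PiLp.toLp_apply, Real.norm_eq_abs, sq_abs]
      rw [div_pow, one_pow, Real.sq_sqrt hn0.le]
    rw [Finset.sum_congr rfl fun i _ => this i]
    rw [Finset.sum_const, Finset.card_univ, Fintype.card_fin, nsmul_eq_mul]
    rw [mul_one_div, div_self (ne_of_gt hn0), Real.sqrt_one]
  have hrS : r ∈ S := by
    simp only [hS, Set.mem_setOf_eq]
    rw [hrn, hrsum, mul_one]
    calc s * Real.sqrt n < 1 * Real.sqrt n := mul_lt_mul_of_pos_right hs1 hsn
      _ = Real.sqrt n := one_mul _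
  have hc0' : (0:ℝ) ≤ c := by
    by_contra hc
    push_neg at hc
    have hfr : f r < c := hfS r hrS
    have hfrneg : f r < 0 := lt_of_lt_of_le hfr hc0
    set δ := c / (2 * f r) with hδdef
    have hδ : 0 < δ := div_pos_of_neg_of_neg hc (by linarith)
    have h1 := hfS (δ • r) (hscale δ hδ r hrS)
    rw [map_smul, smul_eq_mul] at h1
    have hne : f r ≠ 0 := ne_of_lt hfrneg
    have hδf : δ * f r = c / 2 := by
      rw [hδdef, div_mul_eq_mul_div, mul_comm c (f r), mul_comm 2 (f r),
        mul_div_mul_left _ _ hne]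
    rw [hδf] at h1
    linarith
  have hceq : c = 0 := le_antisymm hc0 hc0'
  have hfS0 : ∀ z ∈ S, f z < 0 := fun z hz => hceq ▸ hfS z hz
  set y := (InnerProductSpace.toDual ℝ (EuclideanSpace ℝ (Fin n))).symm f with hydef
  have hy : ∀ z, f z = (inner ℝ y z : ℝ) := by
    intro z
    have hyy : (InnerProductSpace.toDual ℝ (EuclideanSpace ℝ (Fin n))) y = f :=
      LinearIsometryEquiv.apply_symm_apply _ f
    rw [← hyy, InnerProductSpace.toDual_apply_apply]
  set lam : EuclideanSpace ℝ (Fin n) := -y with hlamdef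
  have hinner : ∀ z, (inner ℝ lam z : ℝ) = - f z := by
    intro z
    rw [hy z, hlamdef, inner_neg_left]
  set α : ℝ := inner ℝ lam r with hαdef
  have hα : 0 < α := by
    rw [hαdef, hinner]
    linarith [hfS0 r hrS]
  have hsum_inner : ∀ v : EuclideanSpace ℝ (Fin n),
      ∑ i, v i = Real.sqrt n * (inner ℝ r v : ℝ) := by
    intro v
    have h1 : (inner ℝ r v : ℝ) = ∑ i, (1 / Real.sqrt n) * v i := by
      simp [PiLp.inner_apply, hrdef, mul_comm]
    rw [h1, ← Finset.mul_sum, ← mul_assoc, mul_one_div_cancel (ne_of_gt hsn), one_mul]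
  have hpos : ∀ z : EuclideanSpace ℝ (Fin n),
      s * Real.sqrt n * ‖z‖ ≤ ∑ i, z i → 0 ≤ (inner ℝ lam z : ℝ) := by
    intro z hz
    by_contra hneg
    push_neg at hneg
    set ε : ℝ := -(inner ℝ lam z : ℝ) / (2 * α) with hεdef
    have hεpos : 0 < ε := div_pos (by linarith) (by linarith)
    have hsum2 : ∑ i, (z + ε • r) i = ∑ i, z i + ε * Real.sqrt n := by
      rw [show ∑ i, (z + ε • r) i = ∑ i, z i + ∑ i, (ε • r) i by
        simp [Finset.sum_add_distrib], hsumsmul, hrsum]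
    have hnle : ‖z + ε • r‖ ≤ ‖z‖ + ε := by
      calc ‖z + ε • r‖ ≤ ‖z‖ + ‖ε • r‖ := norm_add_le _ _
        _ = ‖z‖ + ε := by
            rw [norm_smul, Real.norm_eq_abs, abs_of_pos hεpos, hrn, mul_one]
    have hmem : z + ε • r ∈ S := by
      simp only [hS, Set.mem_setOf_eq]
      rw [hsum2]
      have h1 : s * Real.sqrt n * ‖z + ε • r‖
          ≤ s * Real.sqrt n * ‖z‖ + s * Real.sqrt n * ε := by
        calc s * Real.sqrt n * ‖z + ε • r‖
            ≤ s * Real.sqrt n * (‖z‖ + ε) := mul_le_mul_of_nonneg_left hnle hsng.le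
          _ = s * Real.sqrt n * ‖z‖ + s * Real.sqrt n * ε := by ring
      have h2 : s * Real.sqrt n * ε < ε * Real.sqrt n := by nlinarith [mul_pos hεpos hsn, hs1]
      linarith
    have hflt := hfS0 _ hmem
    have hgt : 0 < (inner ℝ lam (z + ε • r) : ℝ) := by rw [hinner]; linarith
    rw [inner_add_right, real_inner_smul_right, ← hαdef] at hgt
    have hεα : ε * α = -(inner ℝ lam z : ℝ) / 2 := by
      rw [hεdef, div_mul_eq_mul_div, mul_comm (-(inner ℝ lam z : ℝ)) α,
        mul_comm (2:ℝ) α, mul_div_mul_left _ _ (ne_of_gt hα)]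
    linarith
  have hrr : (inner ℝ r r : ℝ) = 1 := by
    rw [real_inner_self_eq_norm_sq, hrn]
    norm_num
  set w : EuclideanSpace ℝ (Fin n) := lam - α • r with hwdef
  have hlw : lam = w + α • r := by rw [hwdef]; abel
  have hwr : (inner ℝ w r : ℝ) = 0 := by
    rw [hwdef, inner_sub_left, real_inner_smul_left, hrr, ← hαdef]
    ring
  have hrw : (inner ℝ r w : ℝ) = 0 := by rw [real_inner_comm]; exact hwr
  have hlamw : (inner ℝ lam w : ℝ) = ‖w‖ ^ 2 := by
    rw [hlw, inner_add_left, real_inner_smul_left, hrw, real_inner_self_eq_norm_sq]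
    ring
  have hnlam : ‖lam‖ ^ 2 = ‖w‖ ^ 2 + α ^ 2 := by
    rw [hlw, norm_add_sq_real, real_inner_smul_right, hwr, norm_smul, Real.norm_eq_abs,
      hrn, mul_one, sq_abs]
    ring
  have hlam0 : lam ≠ 0 := by
    intro h0
    have := hα
    rw [hαdef, h0, inner_zero_left] at this
    exact lt_irrefl 0 this
  set β := Real.sqrt (1 - s ^ 2) with hβdef
  have hβnn : 0 ≤ β := Real.sqrt_nonneg _
  have hβsq : β ^ 2 = 1 - s ^ 2 := Real.sq_sqrt (by nlinarith)
  have hkey : β * ‖w‖ ≤ s * α := by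
    rcases eq_or_ne w 0 with hw0 | hw0
    · rw [hw0, norm_zero, mul_zero]
      exact mul_nonneg hs0.le hα.le
    · have hwpos : 0 < ‖w‖ := norm_pos_iff.2 hw0
      have hwne : ‖w‖ ≠ 0 := ne_of_gt hwpos
      set z := s • r - (β / ‖w‖) • w with hzdef2
      have hinrz : (inner ℝ r z : ℝ) = s := by
        rw [hzdef2, inner_sub_right, real_inner_smul_right, real_inner_smul_right,
          hrr, hrw]
        ring
      have hsumz : ∑ i, z i = Real.sqrt n * s := by
        rw [hsum_inner z, hinrz]
      have e1 : ‖s • r‖ ^ 2 = s ^ 2 := by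
        rw [norm_smul, hrn, mul_one, Real.norm_eq_abs, sq_abs]
      have e2 : ‖(β / ‖w‖) • w‖ ^ 2 = 1 - s ^ 2 := by
        rw [norm_smul, Real.norm_eq_abs, abs_of_nonneg (div_nonneg hβnn (norm_nonneg w)),
          mul_pow, div_pow, div_mul_cancel₀ _ (pow_ne_zero 2 hwne), hβsq]
      have e3 : (inner ℝ (s • r) ((β / ‖w‖) • w) : ℝ) = 0 := by
        rw [real_inner_smul_left, real_inner_smul_right, hrw]
        ring
      have hnz : ‖z‖ = 1 := by
        have h1 : ‖z‖ ^ 2 = 1 := by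
          calc ‖z‖ ^ 2
              = ‖s • r‖ ^ 2 - 2 * (inner ℝ (s • r) ((β / ‖w‖) • w) : ℝ)
                + ‖(β / ‖w‖) • w‖ ^ 2 := by rw [hzdef2]; exact norm_sub_sq_real _ _
            _ = 1 := by rw [e1, e2, e3]; ring
        rw [← Real.sqrt_sq (norm_nonneg z), h1, Real.sqrt_one]
      have hge := hpos z (by rw [hnz, hsumz, mul_one]; nlinarith)
      have hlz : (inner ℝ lam z : ℝ) = s * α - (β / ‖w‖) * ‖w‖ ^ 2 := by
        rw [hzdef2, inner_sub_right, real_inner_smul_right, real_inner_smul_right,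
          ← hαdef, hlamw]
      have hdw : (β / ‖w‖) * ‖w‖ ^ 2 = β * ‖w‖ := by
        field_simp
      rw [hlz, hdw] at hge
      linarith
  refine ⟨lam, hlam0, ?_, ?_⟩
  · rw [← hαdef]
    have hsq1 : (β * ‖w‖) ^ 2 ≤ (s * α) ^ 2 := by
      nlinarith [mul_nonneg hβnn (norm_nonneg w), mul_nonneg hs0.le hα.le]
    have heq : (β * ‖lam‖) ^ 2 = (1 - s ^ 2) * ‖w‖ ^ 2 + (1 - s ^ 2) * α ^ 2 := by
      rw [mul_pow, hβsq, hnlam]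
      ring
    have h2 : (1 - s ^ 2) * ‖w‖ ^ 2 ≤ s ^ 2 * α ^ 2 := by
      rw [mul_pow, mul_pow, hβsq] at hsq1
      linarith
    have hsq2 : (β * ‖lam‖) ^ 2 ≤ α ^ 2 := by
      rw [heq]
      nlinarith [sq_nonneg α]
    nlinarith [mul_nonneg hβnn (norm_nonneg lam), hα, hsq2]
  · intro h
    have hie : (inner ℝ lam (A h) : ℝ) = ∑ i, lam i * A h i := by
      simp [PiLp.inner_apply, mul_comm]
    rw [← hie, hinner, hfA h, neg_zero]
end
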